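/- Let G=(V,E) be a graph and H=(V,E') a subgraph with E'⊆E. If A_H is positive definite for every positive definite matrix A with zeros at non-edges of G, then H is a disjoint union of graphs each of which is an induced subgraph of G. -/

import Mathlib

/-!
Suppose `i` and `j` are adjacent in `G` and joined by a walk `w` in `H`, but not adjacent in `H`.
Let `M` be the Laplacian of `w` (the sum of `(e_b - e_a)(e_b - e_a)ᵀ` over its steps `a → b`)
plus the identity on the vertices off `w`. It is positive semidefinite, supported on the diagonal
and the edges of `w`, and kills the indicator of the support of `w`, so it is not positive
definite. Adding `ε (e_i e_jᵀ + e_j e_iᵀ)` with `ε = 1 / (length w + 1)` makes it positive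
definite: by Cauchy–Schwarz, `(y_j - y_i)² ≤ length w · Σ (y_b - y_a)²`, which absorbs the
indefinite term `2 ε y_i y_j`. The new matrix vanishes off `G`, and thresholding it with respect to
`H` gives back `M`.
-/

def threshold {n : ℕ} (G : SimpleGraph (Fin n)) [DecidableRel G.Adj]
    (A : Matrix (Fin n) (Fin n) ℝ) : Matrix (Fin n) (Fin n) ℝ :=
  Matrix.of fun i j => if i = j ∨ G.Adj i j then A i j else 0

open Finset Matrix

namespace SimpleGraph.Walk

variable {V : Type*} {G : SimpleGraph V} {u v : V}

theorem eq_zero_of_forall_getVert_succ_eq (w : G.Walk u v) {y : V → ℝ}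
    (hstep : ∀ l < w.length, y (w.getVert (l + 1)) = y (w.getVert l))
    (hoff : ∀ x ∉ w.support, y x = 0) (hu : y u = 0) : y = 0 := by
  have hwalk : ∀ l ≤ w.length, y (w.getVert l) = 0 := by
    intro l hl
    induction l with
    | zero => simpa using hu
    | succ l ih => rw [hstep l hl, ih (by omega)]
  ext x
  by_cases hx : x ∈ w.support
  · obtain ⟨l, rfl, hl⟩ := mem_support_iff_exists_getVert.mp hx
    exact hwalk l hl
  · exact hoff x hx

theorem sq_sub_le_length_mul_sum_sq (w : G.Walk u v) (y : V → ℝ) :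
    (y v - y u) ^ 2 ≤
      w.length * ∑ l ∈ range w.length, (y (w.getVert (l + 1)) - y (w.getVert l)) ^ 2 := by
  have htelescope := sum_range_sub (fun l => y (w.getVert l)) w.length
  simp only [getVert_zero, getVert_length] at htelescope
  simpa [htelescope] using sq_sum_le_card_mul_sum_sq (s := range w.length)
    (f := fun l => y (w.getVert (l + 1)) - y (w.getVert l))

variable [DecidableEq V]

def stepVec (w : G.Walk u v) (l : ℕ) : V → ℝ :=
  Pi.single (w.getVert (l + 1)) 1 - Pi.single (w.getVert l) 1

def lapMatrixAddOffSupport (w : G.Walk u v) : Matrix V V ℝ :=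
  (∑ l ∈ range w.length, vecMulVec (w.stepVec l) (w.stepVec l)) +
    diagonal fun x => if x ∈ w.support then 0 else 1

theorem lapMatrixAddOffSupport_apply_eq_zero (w : G.Walk u v) {x x' : V} (hne : x ≠ x')
    (hadj : ¬ G.Adj x x') : w.lapMatrixAddOffSupport x x' = 0 := by
  simp only [lapMatrixAddOffSupport, Matrix.add_apply, Matrix.sum_apply, vecMulVec_apply,
    diagonal_apply_ne _ hne, add_zero]
  refine sum_eq_zero fun l hl => ?_
  have hstep := w.adj_getVert_succ (mem_range.mp hl)
  simp only [stepVec, Pi.sub_apply, Pi.single_apply]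
  split_ifs <;> simp_all [G.ne_of_adj, adj_comm]

variable [Fintype V]

theorem posSemidef_lapMatrixAddOffSupport (w : G.Walk u v) :
    w.lapMatrixAddOffSupport.PosSemidef := by
  refine .add (posSemidef_sum _ fun l _ => ?_) (.diagonal fun x => ?_)
  · simpa using posSemidef_vecMulVec_self_star (w.stepVec l)
  · dsimp only [Pi.zero_apply]; split_ifs <;> norm_num

theorem dotProduct_mulVec_lapMatrixAddOffSupport (w : G.Walk u v) (y : V → ℝ) :
    y ⬝ᵥ (w.lapMatrixAddOffSupport *ᵥ y) =
      (∑ l ∈ range w.length, (y (w.getVert (l + 1)) - y (w.getVert l)) ^ 2) +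
        ∑ x with x ∉ w.support, y x ^ 2 := by
  simp only [lapMatrixAddOffSupport, add_mulVec, dotProduct_add, sum_mulVec, dotProduct_sum,
    vecMulVec_mulVec]
  congr 1
  · refine sum_congr rfl fun l _ => ?_
    simp [stepVec, sub_dotProduct, dotProduct_sub, single_dotProduct, dotProduct_single]
    ring
  · simp [dotProduct, mulVec_diagonal, sum_filter]
    refine sum_congr rfl fun x _ => ?_
    split_ifs <;> ring

theorem not_posDef_lapMatrixAddOffSupport (w : G.Walk u v) :
    ¬ w.lapMatrixAddOffSupport.PosDef := by
  intro hpos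
  have hsupp : (fun x => if x ∈ w.support then (1 : ℝ) else 0) ≠ 0 :=
    fun h => by simpa using congr_fun h u
  have hzero := hpos.dotProduct_mulVec_pos hsupp
  simp [star_trivial, dotProduct_mulVec_lapMatrixAddOffSupport, getVert_mem_support] at hzero
  obtain ⟨x, hx⟩ := hzero
  simp at hx

theorem posDef_lapMatrixAddOffSupport_add_single (w : G.Walk u v) :
    (w.lapMatrixAddOffSupport + single u u 1).PosDef := by
  refine .of_dotProduct_mulVec_pos (w.posSemidef_lapMatrixAddOffSupport.isHermitian.add
    (diagonal_single u (1 : ℝ) ▸ isHermitian_diagonal _)) fun y hy => ?_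
  rw [star_trivial, add_mulVec, dotProduct_add, dotProduct_mulVec_lapMatrixAddOffSupport,
    single_mulVec_eq, dotProduct_smul, dotProduct_single, smul_eq_mul, one_mul, mul_one]
  set D := ∑ l ∈ range w.length, (y (w.getVert (l + 1)) - y (w.getVert l)) ^ 2
  set off := ∑ x with x ∉ w.support, y x ^ 2
  have hD : 0 ≤ D := by positivity
  have hoff : 0 ≤ off := by positivity
  have hu : 0 ≤ y u * y u := mul_self_nonneg _
  by_contra! hle
  refine hy (w.eq_zero_of_forall_getVert_succ_eq (fun l hl => ?_) (fun x hx => ?_) ?_)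
  · have := (sum_eq_zero_iff_of_nonneg fun _ _ => sq_nonneg _).mp
      (show D = 0 by linarith) l (mem_range.mpr hl)
    simpa [sub_eq_zero] using this
  · have := (sum_eq_zero_iff_of_nonneg fun _ _ => sq_nonneg _).mp
      (show off = 0 by linarith) x (by simpa using hx)
    simpa using this
  · nlinarith

theorem posDef_lapMatrixAddOffSupport_add_single_add_single (w : G.Walk u v) :
    (w.lapMatrixAddOffSupport +
      (single u v (w.length + 1 : ℝ)⁻¹ + single v u (w.length + 1 : ℝ)⁻¹)).PosDef := by
  set ε := (w.length + 1 : ℝ)⁻¹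
  have hherm : (single u v ε + single v u ε).IsHermitian := by
    simpa [conjTranspose_eq_transpose_of_trivial, transpose_single] using
      isHermitian_add_transpose_self (single u v ε)
  refine .of_dotProduct_mulVec_pos (w.posSemidef_lapMatrixAddOffSupport.isHermitian.add hherm)
    fun y hy => ?_
  have hanchor := w.posDef_lapMatrixAddOffSupport_add_single.dotProduct_mulVec_pos hy
  simp only [star_trivial, add_mulVec, dotProduct_add, dotProduct_mulVec_lapMatrixAddOffSupport,
    single_mulVec_eq, dotProduct_smul, dotProduct_single, smul_eq_mul, one_mul, mul_one]
    at hanchor ⊢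
  set D := ∑ l ∈ range w.length, (y (w.getVert (l + 1)) - y (w.getVert l)) ^ 2
  set off := ∑ x with x ∉ w.support, y x ^ 2
  have hCS : (y v - y u) ^ 2 ≤ w.length * D := w.sq_sub_le_length_mul_sum_sq y
  have hoff : 0 ≤ off := by positivity
  have hk : (0 : ℝ) < w.length + 1 := by positivity
  have hε : (w.length + 1) * ε = 1 := mul_inv_cancel₀ hk.ne'
  -- the gap is `length * off + (length * D - (y v - y u) ^ 2) + y v ^ 2`
  have hdom : D + off + y u * y u ≤
      (w.length + 1) * (D + off + (ε * y v * y u + ε * y u * y v)) := by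
    have hcross : (w.length + 1) * (ε * y v * y u + ε * y u * y v) = 2 * y u * y v := by
      linear_combination (2 * y u * y v) * hε
    nlinarith [sq_nonneg (y v), mul_nonneg (Nat.cast_nonneg (α := ℝ) w.length) hoff]
  exact pos_of_mul_pos_right (hanchor.trans_le hdom) hk.le

end SimpleGraph.Walk

theorem Matrix.single_add_single_apply_eq_zero {α R : Type*} [DecidableEq α] [AddZeroClass R]
    {i j x y : α} (c : R) (h : s(x, y) ≠ s(i, j)) : (single i j c + single j i c) x y = 0 := by
  rw [Ne, Sym2.eq_iff] at h
  simp only [Matrix.add_apply, single_apply]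
  split_ifs <;> simp_all

theorem threshold_add_eq_left {n : ℕ} {H : SimpleGraph (Fin n)} [DecidableRel H.Adj]
    {M N : Matrix (Fin n) (Fin n) ℝ} (hM : ∀ x y, x ≠ y → ¬ H.Adj x y → M x y = 0)
    (hN : ∀ x y, x = y ∨ H.Adj x y → N x y = 0) : threshold H (M + N) = M := by
  ext x y
  simp only [threshold, of_apply, Matrix.add_apply]
  split_ifs with hxy
  · rw [hN x y hxy, add_zero]
  · exact (hM x y (not_or.mp hxy).1 (not_or.mp hxy).2).symm

theorem stmt_8 {n : ℕ} (G H : SimpleGraph (Fin n))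
    [DecidableRel H.Adj] (hsub : H ≤ G)
    (h : ∀ A : Matrix (Fin n) (Fin n) ℝ, A.PosDef →
      (∀ i j : Fin n, i ≠ j → ¬ G.Adj i j → A i j = 0) → (threshold H A).PosDef) :
    ∀ i j : Fin n, H.Reachable i j → G.Adj i j → H.Adj i j := by
  rintro i j ⟨w⟩ hG
  by_contra hH
  set N := single i j (w.length + 1 : ℝ)⁻¹ + single j i (w.length + 1 : ℝ)⁻¹
  have hM (x y : Fin n) : x ≠ y → ¬ H.Adj x y → w.lapMatrixAddOffSupport x y = 0 :=
    w.lapMatrixAddOffSupport_apply_eq_zero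
  have hNG (x y : Fin n) (hxy : ¬ G.Adj x y) : N x y = 0 :=
    single_add_single_apply_eq_zero _ fun he => by
      rcases Sym2.eq_iff.mp he with ⟨rfl, rfl⟩ | ⟨rfl, rfl⟩
      exacts [hxy hG, hxy hG.symm]
  have hNH (x y : Fin n) (hxy : x = y ∨ H.Adj x y) : N x y = 0 :=
    single_add_single_apply_eq_zero _ fun he => by
      rcases Sym2.eq_iff.mp he with ⟨rfl, rfl⟩ | ⟨rfl, rfl⟩
      exacts [hxy.elim hG.ne hH, hxy.elim (hG.ne ·.symm) (hH ·.symm)]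
  have hthreshold := h _ w.posDef_lapMatrixAddOffSupport_add_single_add_single
    fun x y hxy hxyG => by
      rw [Matrix.add_apply, hM x y hxy (hxyG ∘ (hsub ·)), zero_add]
      exact hNG x y hxyG
  rw [threshold_add_eq_left hM hNH] at hthreshold
  exact w.not_posDef_lapMatrixAddOffSupport hthreshold
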